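/- Let ν be a probability measure on D × ℝ^d such that ∫ 𝓐_{v,w} g(x) dν(x,w) = 0 for all g ∈ C²(D) ∩ C(closure D) (an infinitesimal ergodic occupation measure), and suppose ψ ∈ C²(D) ∩ C(closure D) satisfies L_v ψ + (1/2)|σᵀ∇ψ|² = −λ on D. Then λ + (1/2)∫ |σ(x)ᵀ(w − ∇ψ(x))|² dν = (1/2)∫ |σ(x)ᵀ w|² dν. In particular (1/2)∫|σ(x)ᵀw|² dν(x,w) ≥ λ. -/

import Mathlib

/-!
Completing the square, `⟨a w, ∇ψ⟩ - ½|σᵀ∇ψ|² = ½|σᵀw|² - ½|σᵀ(w - ∇ψ)|²`, together with the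
eigenvalue equation turns `𝓐_{v,w} ψ` into `-λ + ½|σᵀw|² - ½|σᵀ(w - ∇ψ)|²` on `D`. Integrating
against `ν`, which annihilates `𝓐_{v,w} ψ`, gives the identity; the inequality follows since the
integrand `|σᵀ(w - ∇ψ)|²` is nonnegative.
-/

open Matrix MeasureTheory Real

/-- Gradient of `f : ℝ^d → ℝ` at `x`. -/
noncomputable def grad {d : ℕ} (f : (Fin d → ℝ) → ℝ) (x : Fin d → ℝ) : Fin d → ℝ :=
  fun i => fderiv ℝ f x (Pi.single i 1)

/-- Hessian matrix of `f` at `x`. -/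
noncomputable def hess {d : ℕ} (f : (Fin d → ℝ) → ℝ) (x : Fin d → ℝ) :
    Matrix (Fin d) (Fin d) ℝ :=
  Matrix.of fun i j => fderiv ℝ (fun y => grad f y j) x (Pi.single i 1)

/-- The operator `L_v f = (1/2) tr(a ∇²f) + ⟨m_v, ∇f⟩`, with `a = σσᵀ`. -/
noncomputable def Lop {d : ℕ} (σ : (Fin d → ℝ) → Matrix (Fin d) (Fin d) ℝ)
    (m : (Fin d → ℝ) → Fin d → ℝ) (f : (Fin d → ℝ) → ℝ) (x : Fin d → ℝ) : ℝ :=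
  (1 / 2) * (σ x * (σ x)ᵀ * hess f x).trace + m x ⬝ᵥ grad f x

/-- Squared Euclidean norm `|σ(x)ᵀ v|²`. -/
noncomputable def sqσ {d : ℕ} (σ : (Fin d → ℝ) → Matrix (Fin d) (Fin d) ℝ)
    (x v : Fin d → ℝ) : ℝ :=
  ((σ x)ᵀ *ᵥ v) ⬝ᵥ ((σ x)ᵀ *ᵥ v)

lemma mul_transpose_mulVec_dotProduct {n k R : Type*} [Fintype n] [Fintype k] [CommSemiring R]
    (A : Matrix n k R) (w g : n → R) :
    ((A * Aᵀ) *ᵥ w) ⬝ᵥ g = (Aᵀ *ᵥ w) ⬝ᵥ (Aᵀ *ᵥ g) := by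
  rw [← mulVec_mulVec, dotProduct_comm, dotProduct_mulVec, ← mulVec_transpose, dotProduct_comm]

section sqσ

variable {d : ℕ} (σ : (Fin d → ℝ) → Matrix (Fin d) (Fin d) ℝ) (x : Fin d → ℝ)

lemma sqσ_nonneg (v : Fin d → ℝ) : 0 ≤ sqσ σ x v :=
  dotProduct_self_star_nonneg _

lemma half_mul_sqσ_sub_sqσ_sub (w g : Fin d → ℝ) :
    (1 / 2) * (sqσ σ x w - sqσ σ x (w - g)) =
      ((σ x * (σ x)ᵀ) *ᵥ w) ⬝ᵥ g - (1 / 2) * sqσ σ x g := by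
  rw [mul_transpose_mulVec_dotProduct]
  simp only [sqσ, mulVec_sub, sub_dotProduct, dotProduct_sub,
    dotProduct_comm ((σ x)ᵀ *ᵥ g) ((σ x)ᵀ *ᵥ w)]
  ring

end sqσ

theorem stmt9_general {d : ℕ} (D : Set (Fin d → ℝ))
    (σ : (Fin d → ℝ) → Matrix (Fin d) (Fin d) ℝ)
    (m : (Fin d → ℝ) → Fin d → ℝ) (lam : ℝ)
    -- the operator `𝓐_{v,w} f(x) = L_v f(x) + ⟨a(x) w, ∇f(x)⟩`
    (Avw : ((Fin d → ℝ) → ℝ) → (Fin d → ℝ) → (Fin d → ℝ) → ℝ)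
    (hAvw : ∀ f x w, Avw f x w = Lop σ m f x + ((σ x * (σ x)ᵀ) *ᵥ w) ⬝ᵥ grad f x)
    (ν : Measure ((Fin d → ℝ) × (Fin d → ℝ))) [IsProbabilityMeasure ν]
    (hνD : ν {p | p.1 ∉ D} = 0)
    -- ν is an infinitesimal ergodic occupation measure
    (hocc : ∀ g : (Fin d → ℝ) → ℝ, ContDiffOn ℝ 2 g D → ContinuousOn g (closure D) →
      ∫ p, Avw g p.1 p.2 ∂ν = 0)
    (ψ : (Fin d → ℝ) → ℝ) (hψ : ContDiffOn ℝ 2 ψ D) (hψc : ContinuousOn ψ (closure D))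
    (heig : ∀ x ∈ D, Lop σ m ψ x + (1 / 2) * sqσ σ x (grad ψ x) = -lam)
    (hint1 : Integrable (fun p => sqσ σ p.1 p.2) ν)
    (hint2 : Integrable (fun p => sqσ σ p.1 (p.2 - grad ψ p.1)) ν) :
    lam + (1 / 2) * ∫ p, sqσ σ p.1 (p.2 - grad ψ p.1) ∂ν =
        (1 / 2) * ∫ p, sqσ σ p.1 p.2 ∂ν ∧
      lam ≤ (1 / 2) * ∫ p, sqσ σ p.1 p.2 ∂ν := by
  have hAψ : ∀ᵐ p ∂ν, Avw ψ p.1 p.2 =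
      -lam + (1 / 2) * (sqσ σ p.1 p.2 - sqσ σ p.1 (p.2 - grad ψ p.1)) := by
    filter_upwards [ae_iff.2 hνD] with p hp
    rw [hAvw, half_mul_sqσ_sub_sqσ_sub]
    linarith [heig p.1 hp]
  have hI := hocc ψ hψ hψc
  have hdiff : Integrable (fun p => (1 / 2 : ℝ) *
      (sqσ σ p.1 p.2 - sqσ σ p.1 (p.2 - grad ψ p.1))) ν := (hint1.sub hint2).const_mul _
  rw [integral_congr_ae hAψ, integral_add (integrable_const _) hdiff,
    integral_const_mul, integral_sub hint1 hint2, integral_const, probReal_univ, one_smul] at hI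
  have hdefect : 0 ≤ ∫ p, sqσ σ p.1 (p.2 - grad ψ p.1) ∂ν :=
    integral_nonneg fun p => sqσ_nonneg _ _ _
  exact ⟨by linarith, by linarith⟩

theorem stmt9 {d : ℕ} (D : Set (Fin d → ℝ)) (hD : IsOpen D)
    (hDb : Bornology.IsBounded D)
    (σ : (Fin d → ℝ) → Matrix (Fin d) (Fin d) ℝ)
    (m : (Fin d → ℝ) → Fin d → ℝ) (lam : ℝ)
    -- the operator `𝓐_{v,w} f(x) = L_v f(x) + ⟨a(x) w, ∇f(x)⟩`
    (Avw : ((Fin d → ℝ) → ℝ) → (Fin d → ℝ) → (Fin d → ℝ) → ℝ)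
    (hAvw : ∀ f x w, Avw f x w = Lop σ m f x + ((σ x * (σ x)ᵀ) *ᵥ w) ⬝ᵥ grad f x)
    (ν : Measure ((Fin d → ℝ) × (Fin d → ℝ))) [IsProbabilityMeasure ν]
    (hνD : ν {p | p.1 ∉ D} = 0)
    -- ν is an infinitesimal ergodic occupation measure
    (hocc : ∀ g : (Fin d → ℝ) → ℝ, ContDiffOn ℝ 2 g D → ContinuousOn g (closure D) →
      ∫ p, Avw g p.1 p.2 ∂ν = 0)
    (ψ : (Fin d → ℝ) → ℝ) (hψ : ContDiffOn ℝ 2 ψ D) (hψc : ContinuousOn ψ (closure D))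
    (heig : ∀ x ∈ D, Lop σ m ψ x + (1 / 2) * sqσ σ x (grad ψ x) = -lam)
    (hint1 : Integrable (fun p => sqσ σ p.1 p.2) ν)
    (hint2 : Integrable (fun p => sqσ σ p.1 (p.2 - grad ψ p.1)) ν) :
    lam + (1 / 2) * ∫ p, sqσ σ p.1 (p.2 - grad ψ p.1) ∂ν =
        (1 / 2) * ∫ p, sqσ σ p.1 p.2 ∂ν ∧
      lam ≤ (1 / 2) * ∫ p, sqσ σ p.1 p.2 ∂ν :=
  stmt9_general D σ m lam Avw hAvw ν hνD hocc ψ hψ hψc heig hint1 hint2
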